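/- (Corollary 5.5, simplified a priori error bound, ℓ² version.) Suppose the weighting matrix is the identity, W̄ = I_{N·N_t}. Let x be a space-time function with r̄(x) = 0, and let x̃ ∈ S satisfy ‖r̄(x̃)‖₂ ≤ ‖r̄(w)‖₂ for all w ∈ S. Assume there exists s_A > 0 with ‖A_LM z‖₂ ≥ s_A ‖z‖₂ for all z ∈ ℝ^{N·N_t}, that σ_max(A_LM) ≥ s_A, and that Δt · L_f · σ_max(B_LM) < s_A. Define the Lebesgue constant Λ := (σ_max(A_LM) − s_A + 2·Δt·L_f·σ_max(B_LM)) / (s_A − Δt·L_f·σ_max(B_LM)). Then for every w ∈ S, ‖vec(x) − vec(x̃)‖₂ ≤ (1 + Λ) · ‖vec(x) − vec(w)‖₂. -/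

import Mathlib

noncomputable section

/-- A space-time function. -/
abbrev SpaceTime (N Nt : ℕ) := Fin Nt → EuclideanSpace ℝ (Fin N)

/-- Vectorization of a space-time function: stacks the blocks `w 0, …, w (Nt-1)`
into a single Euclidean vector of dimension `N * Nt`. -/
def vec {N Nt : ℕ} (w : SpaceTime N Nt) : EuclideanSpace ℝ (Fin Nt × Fin N) :=
  (WithLp.equiv 2 _).symm (fun p => w p.1 p.2)

/-- The largest singular value (ℓ² operator norm) of a real matrix. -/
def sigmaMax {m n : Type*} [Fintype m] [Fintype n] [DecidableEq n] (M : Matrix m n ℝ) : ℝ :=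
  ‖LinearMap.toContinuousLinearMap (Matrix.toEuclideanLin M)‖

/-- Matrix–vector multiplication as a map between Euclidean spaces. -/
def mulVecE {m n : Type*} [Fintype m] [Fintype n] [DecidableEq n] (M : Matrix m n ℝ)
    (v : EuclideanSpace ℝ n) : EuclideanSpace ℝ m :=
  Matrix.toEuclideanLin M v

/-- The stacked velocity `F̄(w)`: vectorization of `n ↦ f (w n, t n)`. -/
def Fbar {N Nt : ℕ} (f : EuclideanSpace ℝ (Fin N) × ℝ → EuclideanSpace ℝ (Fin N))
    (t : Fin Nt → ℝ) (w : SpaceTime N Nt) : EuclideanSpace ℝ (Fin Nt × Fin N) :=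
  vec (fun n => f (w n, t n))

/-- The space-time linear multistep residual `r̄(w) = A_LM vec(w) − Δt B_LM F̄(w) + b`. -/
def resid {N Nt : ℕ} (A_LM B_LM : Matrix (Fin Nt × Fin N) (Fin Nt × Fin N) ℝ)
    (b : EuclideanSpace ℝ (Fin Nt × Fin N)) (Δt : ℝ)
    (f : EuclideanSpace ℝ (Fin N) × ℝ → EuclideanSpace ℝ (Fin N))
    (t : Fin Nt → ℝ) (w : SpaceTime N Nt) : EuclideanSpace ℝ (Fin Nt × Fin N) :=
  mulVecE A_LM (vec w) - Δt • mulVecE B_LM (Fbar f t w) + b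

/-!
The residual is a bi-Lipschitz function of the state: writing `c = Δt L_f σ_max(B_LM)`,
`(s_A - c) ‖vec u - vec v‖ ≤ ‖r̄(u) - r̄(v)‖ ≤ (σ_max(A_LM) + c) ‖vec u - vec v‖`.
Since `r̄(x) = 0` and `x̃` minimizes `‖r̄‖` over `S`, for `w ∈ S`
`(s_A - c) ‖x - x̃‖ ≤ ‖r̄(x̃)‖ ≤ ‖r̄(w)‖ ≤ (σ_max(A_LM) + c) ‖x - w‖`,
and `(σ_max(A_LM) + c) / (s_A - c) = 1 + Λ`.
-/

section MulVecE

variable {m n : Type*} [Fintype m] [Fintype n] [DecidableEq n]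

lemma mulVecE_sub (M : Matrix m n ℝ) (u v : EuclideanSpace ℝ n) :
    mulVecE M (u - v) = mulVecE M u - mulVecE M v :=
  map_sub _ _ _

lemma norm_mulVecE_le (M : Matrix m n ℝ) (v : EuclideanSpace ℝ n) :
    ‖mulVecE M v‖ ≤ sigmaMax M * ‖v‖ :=
  (LinearMap.toContinuousLinearMap (Matrix.toEuclideanLin M)).le_opNorm v

lemma sigmaMax_nonneg (M : Matrix m n ℝ) : 0 ≤ sigmaMax M :=
  norm_nonneg _

end MulVecE

section SpaceTime

variable {N Nt : ℕ}

lemma norm_vec_sq (g : SpaceTime N Nt) : ‖vec g‖ ^ 2 = ∑ n, ‖g n‖ ^ 2 := by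
  have hblock : ∀ n, ‖g n‖ ^ 2 = ∑ i, ‖g n i‖ ^ 2 := fun n => by
    rw [EuclideanSpace.norm_eq, Real.sq_sqrt (by positivity)]
  rw [EuclideanSpace.norm_eq, Real.sq_sqrt (by positivity)]
  simp [hblock, Fintype.sum_prod_type, vec]

lemma norm_vec_le_mul_of_forall {g h : SpaceTime N Nt} {L : ℝ} (hL : 0 ≤ L)
    (hgh : ∀ n, ‖g n‖ ≤ L * ‖h n‖) : ‖vec g‖ ≤ L * ‖vec h‖ := by
  refine le_of_sq_le_sq ?_ (by positivity)
  rw [mul_pow, norm_vec_sq, norm_vec_sq, Finset.mul_sum]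
  refine Finset.sum_le_sum fun n _ => ?_
  rw [← mul_pow]
  exact pow_le_pow_left₀ (norm_nonneg _) (hgh n) 2

variable {f : EuclideanSpace ℝ (Fin N) × ℝ → EuclideanSpace ℝ (Fin N)} {t : Fin Nt → ℝ}
  {L_f : ℝ}

lemma norm_Fbar_sub_le (hLf : 0 ≤ L_f)
    (hlip : ∀ (u v : EuclideanSpace ℝ (Fin N)) (n : Fin Nt),
      ‖f (u, t n) - f (v, t n)‖ ≤ L_f * ‖u - v‖)
    (u v : SpaceTime N Nt) : ‖Fbar f t u - Fbar f t v‖ ≤ L_f * ‖vec u - vec v‖ :=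
  norm_vec_le_mul_of_forall (g := fun n => f (u n, t n) - f (v n, t n)) (h := u - v) hLf
    fun n => hlip (u n) (v n) n

variable {A_LM B_LM : Matrix (Fin Nt × Fin N) (Fin Nt × Fin N) ℝ}
  {b : EuclideanSpace ℝ (Fin Nt × Fin N)} {Δt : ℝ}

lemma resid_sub_resid (u v : SpaceTime N Nt) :
    resid A_LM B_LM b Δt f t u - resid A_LM B_LM b Δt f t v =
      mulVecE A_LM (vec u - vec v) - Δt • mulVecE B_LM (Fbar f t u - Fbar f t v) := by
  simp only [resid, mulVecE_sub, smul_sub]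
  abel

lemma norm_smul_mulVecE_Fbar_sub_le (hΔt : 0 ≤ Δt)
    (hF : ∀ u v : SpaceTime N Nt, ‖Fbar f t u - Fbar f t v‖ ≤ L_f * ‖vec u - vec v‖)
    (u v : SpaceTime N Nt) :
    ‖Δt • mulVecE B_LM (Fbar f t u - Fbar f t v)‖ ≤
      Δt * L_f * sigmaMax B_LM * ‖vec u - vec v‖ := by
  rw [norm_smul, Real.norm_of_nonneg hΔt]
  calc Δt * ‖mulVecE B_LM (Fbar f t u - Fbar f t v)‖
      ≤ Δt * (sigmaMax B_LM * (L_f * ‖vec u - vec v‖)) := by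
        gcongr
        exact (norm_mulVecE_le _ _).trans
          (mul_le_mul_of_nonneg_left (hF u v) (sigmaMax_nonneg _))
    _ = Δt * L_f * sigmaMax B_LM * ‖vec u - vec v‖ := by ring

lemma sub_mul_norm_le_norm_resid_sub (hΔt : 0 ≤ Δt)
    (hF : ∀ u v : SpaceTime N Nt, ‖Fbar f t u - Fbar f t v‖ ≤ L_f * ‖vec u - vec v‖) {sA : ℝ}
    (hAlow : ∀ z : EuclideanSpace ℝ (Fin Nt × Fin N), sA * ‖z‖ ≤ ‖mulVecE A_LM z‖)
    (u v : SpaceTime N Nt) :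
    (sA - Δt * L_f * sigmaMax B_LM) * ‖vec u - vec v‖ ≤
      ‖resid A_LM B_LM b Δt f t u - resid A_LM B_LM b Δt f t v‖ := by
  rw [resid_sub_resid]
  have hB := norm_smul_mulVecE_Fbar_sub_le (B_LM := B_LM) hΔt hF u v
  have hA := hAlow (vec u - vec v)
  have := norm_sub_norm_le (mulVecE A_LM (vec u - vec v))
    (Δt • mulVecE B_LM (Fbar f t u - Fbar f t v))
  linarith

lemma norm_resid_sub_le (hΔt : 0 ≤ Δt)
    (hF : ∀ u v : SpaceTime N Nt, ‖Fbar f t u - Fbar f t v‖ ≤ L_f * ‖vec u - vec v‖)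
    (u v : SpaceTime N Nt) :
    ‖resid A_LM B_LM b Δt f t u - resid A_LM B_LM b Δt f t v‖ ≤
      (sigmaMax A_LM + Δt * L_f * sigmaMax B_LM) * ‖vec u - vec v‖ := by
  rw [resid_sub_resid]
  have hB := norm_smul_mulVecE_Fbar_sub_le (B_LM := B_LM) hΔt hF u v
  have hA := norm_mulVecE_le A_LM (vec u - vec v)
  have := norm_sub_le (mulVecE A_LM (vec u - vec v))
    (Δt • mulVecE B_LM (Fbar f t u - Fbar f t v))
  linarith

end SpaceTime

theorem simplified_apriori_l2_bound_general {N Nt : ℕ}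
    (t : Fin Nt → ℝ) (Δt : ℝ) (hΔt : 0 < Δt)
    (A_LM B_LM : Matrix (Fin Nt × Fin N) (Fin Nt × Fin N) ℝ)
    (b : EuclideanSpace ℝ (Fin Nt × Fin N))
    (f : EuclideanSpace ℝ (Fin N) × ℝ → EuclideanSpace ℝ (Fin N))
    (L_f : ℝ) (hLf : 0 ≤ L_f)
    (hlip : ∀ (u v : EuclideanSpace ℝ (Fin N)) (n : Fin Nt),
      ‖f (u, t n) - f (v, t n)‖ ≤ L_f * ‖u - v‖)
    (S : Set (SpaceTime N Nt))
    (x : SpaceTime N Nt) (hx : resid A_LM B_LM b Δt f t x = 0)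
    (xt : SpaceTime N Nt)
    (hopt : ∀ w ∈ S, ‖resid A_LM B_LM b Δt f t xt‖ ≤ ‖resid A_LM B_LM b Δt f t w‖)
    (sA : ℝ)
    (hAlow : ∀ z : EuclideanSpace ℝ (Fin Nt × Fin N), sA * ‖z‖ ≤ ‖mulVecE A_LM z‖)
    (hdt : Δt * L_f * sigmaMax B_LM < sA) :
    ∀ w ∈ S, ‖vec x - vec xt‖ ≤
      (1 + (sigmaMax A_LM - sA + 2 * Δt * L_f * sigmaMax B_LM) /
        (sA - Δt * L_f * sigmaMax B_LM)) * ‖vec x - vec w‖ := by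
  intro w hw
  have hgap : 0 < sA - Δt * L_f * sigmaMax B_LM := sub_pos.mpr hdt
  have hF := norm_Fbar_sub_le hLf hlip
  have hlow := sub_mul_norm_le_norm_resid_sub (B_LM := B_LM) (b := b) hΔt.le hF hAlow xt x
  have hup := norm_resid_sub_le (A_LM := A_LM) (B_LM := B_LM) (b := b) hΔt.le hF w x
  rw [hx, sub_zero] at hlow hup
  have hΛ : 1 + (sigmaMax A_LM - sA + 2 * Δt * L_f * sigmaMax B_LM) /
      (sA - Δt * L_f * sigmaMax B_LM) =
      (sigmaMax A_LM + Δt * L_f * sigmaMax B_LM) / (sA - Δt * L_f * sigmaMax B_LM) := by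
    field_simp
    ring
  rw [hΛ, div_mul_eq_mul_div, le_div_iff₀ hgap, norm_sub_rev (vec x) (vec xt),
    norm_sub_rev (vec x) (vec w)]
  linarith [hopt w hw]

/-- Corollary 5.5, ℓ² version: simplified a priori error bound
for the unweighted (identity weighting matrix) case. -/
theorem simplified_apriori_l2_bound {N Nt : ℕ} (hN : 1 ≤ N) (hNt : 1 ≤ Nt)
    (t : Fin Nt → ℝ) (Δt : ℝ) (hΔt : 0 < Δt)
    (A_LM B_LM : Matrix (Fin Nt × Fin N) (Fin Nt × Fin N) ℝ)
    (b : EuclideanSpace ℝ (Fin Nt × Fin N))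
    (f : EuclideanSpace ℝ (Fin N) × ℝ → EuclideanSpace ℝ (Fin N))
    (L_f : ℝ) (hLf : 0 ≤ L_f)
    (hlip : ∀ (u v : EuclideanSpace ℝ (Fin N)) (n : Fin Nt),
      ‖f (u, t n) - f (v, t n)‖ ≤ L_f * ‖u - v‖)
    (S : Set (SpaceTime N Nt))
    (x : SpaceTime N Nt) (hx : resid A_LM B_LM b Δt f t x = 0)
    (xt : SpaceTime N Nt) (hxtS : xt ∈ S)
    (hopt : ∀ w ∈ S, ‖resid A_LM B_LM b Δt f t xt‖ ≤ ‖resid A_LM B_LM b Δt f t w‖)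
    (sA : ℝ) (hsA : 0 < sA)
    (hAlow : ∀ z : EuclideanSpace ℝ (Fin Nt × Fin N), sA * ‖z‖ ≤ ‖mulVecE A_LM z‖)
    (hAup : sA ≤ sigmaMax A_LM)
    (hdt : Δt * L_f * sigmaMax B_LM < sA) :
    ∀ w ∈ S, ‖vec x - vec xt‖ ≤
      (1 + (sigmaMax A_LM - sA + 2 * Δt * L_f * sigmaMax B_LM) /
        (sA - Δt * L_f * sigmaMax B_LM)) * ‖vec x - vec w‖ :=
  simplified_apriori_l2_bound_general t Δt hΔt A_LM B_LM b f L_f hLf hlip S x hx xt hopt sA hAlow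
    hdt
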